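/- arXiv:1301.5259 — 4 statements merged into one kernel-verified Lean document; each statement's English description precedes it below -/
import Mathlib

section
/- (Expander Mixing Lemma for contingency tables) Let C be an n×m nonnegative matrix with total sum 1, positive row and column sums, and let s₂ be the second largest singular value of the correspondence matrix C_corr = D_row^{-1/2} C D_col^{-1/2}. Then for all subsets R of rows and C' of columns: |c(R,C') − Vol(R)·Vol(C')| ≤ s₂ · sqrt(Vol(R)·Vol(C')), where c(R,C') = Σ_{i∈R} Σ_{j∈C'} c_ij, Vol(R) = Σ_{i∈R} d_row,i, Vol(C') = Σ_{j∈C'} d_col,j. -/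
/-!
Weighting the deflated correspondence matrix by `√d_row` on the left and `√d_col` on the right
turns its `(i, j)` entry into `c_ij - d_row,i * d_col,j`. Hence `c(R, C') - Vol(R) Vol(C')` is the
bilinear form of the deflated matrix at the vectors `1_R √d_row` and `1_C' √d_col`, whose
Euclidean norms are `√Vol(R)` and `√Vol(C')`; Cauchy–Schwarz and the operator-norm bound finish.
-/

noncomputable def specNorm {n m : ℕ} (A : Matrix (Fin n) (Fin m) ℝ) : ℝ :=
  ‖(Matrix.toEuclideanLin A).toContinuousLinearMap‖

open Matrix Finset

theorem dotProduct_mulVec_ite_mem {ι κ : Type*} [Fintype ι] [Fintype κ] [DecidableEq ι]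
    [DecidableEq κ] (A : Matrix ι κ ℝ) (s : Finset ι) (t : Finset κ) (u : ι → ℝ) (v : κ → ℝ) :
    (fun i => if i ∈ s then u i else 0) ⬝ᵥ (A *ᵥ fun j => if j ∈ t then v j else 0)
      = ∑ i ∈ s, ∑ j ∈ t, u i * A i j * v j := by
  simp [dotProduct, mulVec, mul_sum, mul_assoc]

theorem EuclideanSpace.norm_toLp_ite_sqrt {ι : Type*} [Fintype ι] [DecidableEq ι] (s : Finset ι)
    (d : ι → ℝ) (hd : ∀ i ∈ s, 0 ≤ d i) :
    ‖WithLp.toLp 2 (fun i => if i ∈ s then √(d i) else 0)‖ = √(∑ i ∈ s, d i) := by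
  rw [EuclideanSpace.norm_eq]
  congr 1
  calc ∑ i, ‖if i ∈ s then √(d i) else 0‖ ^ 2 = ∑ i, if i ∈ s then d i else 0 := by
        refine sum_congr rfl fun i _ => ?_
        split_ifs with hi
        · rw [Real.norm_eq_abs, sq_abs, Real.sq_sqrt (hd i hi)]
        · simp
    _ = ∑ i ∈ s, d i := by rw [sum_ite_mem, univ_inter]

theorem abs_dotProduct_mulVec_le_specNorm {n m : ℕ} (A : Matrix (Fin n) (Fin m) ℝ)
    (x : Fin n → ℝ) (y : Fin m → ℝ) :
    |x ⬝ᵥ (A *ᵥ y)| ≤ specNorm A * ‖WithLp.toLp 2 x‖ * ‖WithLp.toLp 2 y‖ := by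
  have hinner : x ⬝ᵥ (A *ᵥ y) = inner ℝ (WithLp.toLp 2 x) (toEuclideanLin A (WithLp.toLp 2 y)) :=
    dotProduct_comm _ _
  calc |x ⬝ᵥ (A *ᵥ y)|
      ≤ ‖WithLp.toLp 2 x‖ * ‖(toEuclideanLin A).toContinuousLinearMap (WithLp.toLp 2 y)‖ :=
        hinner ▸ abs_real_inner_le_norm _ _
    _ ≤ ‖WithLp.toLp 2 x‖ * (specNorm A * ‖WithLp.toLp 2 y‖) := by
        gcongr; exact ContinuousLinearMap.le_opNorm _ _
    _ = specNorm A * ‖WithLp.toLp 2 x‖ * ‖WithLp.toLp 2 y‖ := by ring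

theorem abs_sum_sqrt_mul_mul_sqrt_le_specNorm {n m : ℕ} (M : Matrix (Fin n) (Fin m) ℝ)
    (d : Fin n → ℝ) (e : Fin m → ℝ) (R : Finset (Fin n)) (S : Finset (Fin m))
    (hd : ∀ i ∈ R, 0 ≤ d i) (he : ∀ j ∈ S, 0 ≤ e j) :
    |∑ i ∈ R, ∑ j ∈ S, √(d i) * M i j * √(e j)|
      ≤ specNorm M * √((∑ i ∈ R, d i) * ∑ j ∈ S, e j) := by
  rw [← dotProduct_mulVec_ite_mem, Real.sqrt_mul (sum_nonneg hd), ← mul_assoc,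
    ← EuclideanSpace.norm_toLp_ite_sqrt R d hd, ← EuclideanSpace.norm_toLp_ite_sqrt S e he]
  exact abs_dotProduct_mulVec_le_specNorm M _ _

theorem sqrt_mul_div_sub_mul_sqrt {a b : ℝ} (ha : 0 < a) (hb : 0 < b) (c : ℝ) :
    √a * (c / (√a * √b) - √a * √b) * √b = c - a * b := by
  have := Real.sqrt_pos.2 ha
  have := Real.sqrt_pos.2 hb
  field_simp
  rw [Real.sq_sqrt ha.le, Real.sq_sqrt hb.le]

theorem expander_mixing_contingency_general {n m : ℕ}
    (C : Matrix (Fin n) (Fin m) ℝ)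
    (drow : Fin n → ℝ) (dcol : Fin m → ℝ)
    (hrpos : ∀ i, 0 < drow i) (hcpos : ∀ j, 0 < dcol j)
    (Ccorr : Matrix (Fin n) (Fin m) ℝ)
    (hCcorr : ∀ i j, Ccorr i j = C i j / (Real.sqrt (drow i) * Real.sqrt (dcol j)))
    (s₂ : ℝ)
    (hs₂ : s₂ = specNorm (Ccorr - Matrix.vecMulVec (fun i => Real.sqrt (drow i))
      (fun j => Real.sqrt (dcol j)))) :
    ∀ R : Finset (Fin n), ∀ C' : Finset (Fin m),
      |(∑ i ∈ R, ∑ j ∈ C', C i j) - (∑ i ∈ R, drow i) * (∑ j ∈ C', dcol j)|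
        ≤ s₂ * Real.sqrt ((∑ i ∈ R, drow i) * (∑ j ∈ C', dcol j)) := by
  intro R C'
  have hentry (i : Fin n) (j : Fin m) :
      √(drow i) * (Ccorr - vecMulVec (fun i => √(drow i)) (fun j => √(dcol j))) i j * √(dcol j)
        = C i j - drow i * dcol j := by
    rw [Matrix.sub_apply, vecMulVec_apply, hCcorr, sqrt_mul_div_sub_mul_sqrt (hrpos i) (hcpos j)]
  have hsum : ∑ i ∈ R, ∑ j ∈ C', (C i j - drow i * dcol j)
      = (∑ i ∈ R, ∑ j ∈ C', C i j) - (∑ i ∈ R, drow i) * (∑ j ∈ C', dcol j) := by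
    simp only [sum_sub_distrib, sum_mul_sum]
  rw [hs₂, ← hsum]
  simp_rw [← hentry]
  exact abs_sum_sqrt_mul_mul_sqrt_le_specNorm _ drow dcol R C' (fun i _ => (hrpos i).le)
    (fun j _ => (hcpos j).le)

/-- Expander Mixing Lemma for contingency tables. The second largest singular
value `s₂` of the correspondence matrix is the spectral norm of the correspondence
matrix after deflating the top singular pair `(v₁, u₁)`. -/
theorem expander_mixing_contingency {n m : ℕ}
    (C : Matrix (Fin n) (Fin m) ℝ) (hC : ∀ i j, 0 ≤ C i j)
    (htot : ∑ i, ∑ j, C i j = 1)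
    (drow : Fin n → ℝ) (dcol : Fin m → ℝ)
    (hdrow : ∀ i, drow i = ∑ j, C i j) (hdcol : ∀ j, dcol j = ∑ i, C i j)
    (hrpos : ∀ i, 0 < drow i) (hcpos : ∀ j, 0 < dcol j)
    (Ccorr : Matrix (Fin n) (Fin m) ℝ)
    (hCcorr : ∀ i j, Ccorr i j = C i j / (Real.sqrt (drow i) * Real.sqrt (dcol j)))
    (s₂ : ℝ)
    (hs₂ : s₂ = specNorm (Ccorr - Matrix.vecMulVec (fun i => Real.sqrt (drow i))
      (fun j => Real.sqrt (dcol j)))) :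
    ∀ R : Finset (Fin n), ∀ C' : Finset (Fin m),
      |(∑ i ∈ R, ∑ j ∈ C', C i j) - (∑ i ∈ R, drow i) * (∑ j ∈ C', dcol j)|
        ≤ s₂ * Real.sqrt ((∑ i ∈ R, drow i) * (∑ j ∈ C', dcol j)) :=
  expander_mixing_contingency_general C drow dcol hrpos hcpos Ccorr hCcorr s₂ hs₂
end

section
/- The weighted k-variance of the row representatives equals the sum of squared distances of the top-k left singular vectors to the subspace spanned by the D_row^{1/2}-scaled normalized partition vectors: S_k²(X) = Σ_{i=1}^k dist²(v_i, F), where F = Span{D_row^{1/2}w₁,...,D_row^{1/2}w_k} and w_a has coordinates 1/sqrt(Vol(R_a)) on R_a and 0 elsewhere, provided the partition (R₁,...,R_k) attains the minimum in the definition of S_k². -/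
open Finset
open scoped RealInnerProductSpace

/-!
Scaling by `D^{1/2}` is an isometry from the `d`-weighted `ℓ²` space onto Euclidean space, and it
maps the indicator of a cluster `R_a` to a multiple of `D^{1/2} w_a`. So, column by column, the
weighted within-cluster variance is the squared distance from `D^{1/2} x` to the span of the
`D^{1/2} w_a`: the foot of the perpendicular is `D^{1/2}` times the piecewise constant vector of
cluster means, because weighted deviations from a weighted mean sum to zero.
-/

theorem Metric.infDist_span_eq_norm_sub {F : Type*} [NormedAddCommGroup F]
    [InnerProductSpace ℝ F] {s : Set F} {x p : F} (hp : p ∈ Submodule.span ℝ s)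
    (horth : ∀ y ∈ s, ⟪x - p, y⟫ = 0) :
    Metric.infDist x (Submodule.span ℝ s : Set F) = ‖x - p‖ := by
  have hperp : Submodule.span ℝ s ≤ (ℝ ∙ (x - p))ᗮ :=
    Submodule.span_le.2 fun y hy =>
      Submodule.mem_orthogonal_singleton_iff_inner_right.2 (horth y hy)
  rw [Metric.infDist_eq_iInf]
  simp only [dist_eq_norm]
  exact ((Submodule.norm_eq_iInf_iff_real_inner_eq_zero _ hp).2 fun y hy =>
    Submodule.mem_orthogonal_singleton_iff_inner_right.1 (hperp hy)).symm

theorem Finset.sum_mul_sub_weighted_mean_eq_zero {ι : Type*} (s : Finset ι) (d x : ι → ℝ)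
    (h : ∑ i ∈ s, d i ≠ 0) :
    ∑ i ∈ s, d i * (x i - (∑ j ∈ s, d j * x j) / ∑ j ∈ s, d j) = 0 := by
  simp only [mul_sub, sum_sub_distrib, ← sum_mul]
  field_simp
  ring

noncomputable section Clustering

variable {ι κ : Type*} [Fintype ι] [DecidableEq κ] (d : ι → ℝ) (f : ι → κ)

def clusterVol (a : κ) : ℝ :=
  ∑ i ∈ univ.filter (fun i => f i = a), d i

def clusterMean (x : ι → ℝ) (a : κ) : ℝ :=
  (∑ j ∈ univ.filter (fun j => f j = a), d j * x j) / clusterVol d f a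

/-- The paper's `D_row^{1/2} w_a`; it is `0` when the cluster `a` is empty. -/
def clusterVec (a : κ) : EuclideanSpace ℝ ι :=
  WithLp.toLp 2 fun i => if f i = a then √(d i) / √(clusterVol d f a) else 0

def clusterProj (x : ι → ℝ) : EuclideanSpace ℝ ι :=
  WithLp.toLp 2 fun i => √(d i) * clusterMean d f x (f i)

variable {d}

theorem clusterVol_pos (hd : ∀ i, 0 < d i) (i : ι) : 0 < clusterVol d f (f i) :=
  sum_pos' (fun j _ => (hd j).le) ⟨i, by simp, hd i⟩

theorem sum_mul_sub_clusterMean_eq_zero (x : ι → ℝ) {a : κ} (h : clusterVol d f a ≠ 0) :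
    ∑ i ∈ univ.filter (fun i => f i = a), d i * (x i - clusterMean d f x a) = 0 :=
  sum_mul_sub_weighted_mean_eq_zero _ d x h

theorem clusterProj_mem_span [Fintype κ] (hd : ∀ i, 0 < d i) (x : ι → ℝ) :
    clusterProj d f x ∈ Submodule.span ℝ (Set.range (clusterVec d f)) := by
  have hsum : clusterProj d f x =
      ∑ a, (√(clusterVol d f a) * clusterMean d f x a) • clusterVec d f a := by
    ext i
    have hV : √(clusterVol d f (f i)) ≠ 0 := (Real.sqrt_pos.2 (clusterVol_pos f hd i)).ne'
    simp only [clusterProj, clusterVec, WithLp.ofLp_sum, WithLp.ofLp_smul, Finset.sum_apply,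
      Pi.smul_apply, smul_eq_mul, mul_ite, mul_zero, sum_ite_eq, mem_univ, ↓reduceIte]
    field_simp
  rw [hsum]
  exact Submodule.sum_mem _ fun a _ => Submodule.smul_mem _ _ (Submodule.subset_span ⟨a, rfl⟩)

theorem inner_sub_clusterProj_clusterVec (hd : ∀ i, 0 ≤ d i) (x : ι → ℝ) (a : κ) :
    ⟪WithLp.toLp 2 (fun i => √(d i) * x i) - clusterProj d f x, clusterVec d f a⟫ = 0 := by
  have hinner :
      ⟪WithLp.toLp 2 (fun i => √(d i) * x i) - clusterProj d f x, clusterVec d f a⟫ =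
      (∑ i ∈ univ.filter (fun i => f i = a), d i * (x i - clusterMean d f x a)) /
        √(clusterVol d f a) := by
    rw [sum_div, sum_filter, PiLp.inner_apply]
    refine sum_congr rfl fun i _ => ?_
    split_ifs with hi
    · subst hi
      simp only [clusterProj, clusterVec, PiLp.sub_apply, if_pos, RCLike.inner_apply,
        conj_trivial]
      rw [div_eq_mul_inv]
      linear_combination (x i - clusterMean d f x (f i)) * (√(clusterVol d f (f i)))⁻¹ *
        Real.mul_self_sqrt (hd i)
    · simp [clusterVec, hi]
  rcases eq_or_ne (clusterVol d f a) 0 with h | h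
  · simp [hinner, h]
  · rw [hinner, sum_mul_sub_clusterMean_eq_zero f x h, zero_div]

theorem sum_weighted_sq_sub_clusterMean_eq_infDist_sq [Fintype κ] (hd : ∀ i, 0 < d i)
    (x : ι → ℝ) :
    ∑ a, ∑ i ∈ univ.filter (fun i => f i = a), d i * (x i - clusterMean d f x a) ^ 2 =
      Metric.infDist (WithLp.toLp 2 fun i => √(d i) * x i)
        (Submodule.span ℝ (Set.range (clusterVec d f)) : Set (EuclideanSpace ℝ ι)) ^ 2 := by
  rw [Metric.infDist_span_eq_norm_sub (clusterProj_mem_span f hd x)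
      (Set.forall_mem_range.2
        (inner_sub_clusterProj_clusterVec f (fun i => (hd i).le) x)),
    EuclideanSpace.norm_sq_eq, ← sum_fiberwise univ f]
  refine sum_congr rfl fun a _ => sum_congr rfl fun i hi => ?_
  rw [(mem_filter.1 hi).2.symm]
  simp [clusterProj, ← mul_sub, mul_pow, Real.sq_sqrt (hd i).le]

end Clustering

theorem weighted_k_variance_eq_sum_dist_sq_general {n k : ℕ}
    (d : Fin n → ℝ) (hd : ∀ i, 0 < d i)
    (v : Fin k → EuclideanSpace ℝ (Fin n))
    (X : Matrix (Fin n) (Fin k) ℝ)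
    (hX : ∀ i a, X i a = v a i / Real.sqrt (d i))
    (Svar : (Fin n → Fin k) → ℝ)
    (hSvar : ∀ g : Fin n → Fin k, Svar g =
      ∑ a : Fin k, ∑ i ∈ Finset.univ.filter (fun i => g i = a), d i *
        (∑ b : Fin k, (X i b -
          (∑ j ∈ Finset.univ.filter (fun j => g j = a), d j * X j b) /
            (∑ j ∈ Finset.univ.filter (fun j => g j = a), d j)) ^ 2))
    (f : Fin n → Fin k)
    (w : Fin k → EuclideanSpace ℝ (Fin n))
    (hw : ∀ a i, w a i = if f i = a then
      Real.sqrt (d i) / Real.sqrt (∑ j ∈ Finset.univ.filter (fun j => f j = a), d j) else 0) :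
    Svar f = ∑ a : Fin k,
      (Metric.infDist (v a) (Submodule.span ℝ (Set.range w) : Set (EuclideanSpace ℝ (Fin n)))) ^ 2 := by
  have hv_eq : ∀ b, v b = WithLp.toLp 2 fun i => √(d i) * X i b := fun b => by
    ext i
    simp [hX, mul_div_cancel₀ _ (Real.sqrt_pos.2 (hd i)).ne']
  have hw_eq : w = clusterVec d f := funext fun a => PiLp.ext (hw a)
  calc Svar f
      = ∑ b, ∑ a, ∑ i ∈ univ.filter (fun i => f i = a),
          d i * (X i b - clusterMean d f (X · b) a) ^ 2 := by
        simp only [hSvar, mul_sum]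
        rw [sum_comm]
        exact sum_congr rfl fun a _ => sum_comm
    _ = _ := by
        simp only [hv_eq, hw_eq, sum_weighted_sq_sub_clusterMean_eq_infDist_sq f hd]

theorem weighted_k_variance_eq_sum_dist_sq {n k : ℕ}
    (d : Fin n → ℝ) (hd : ∀ i, 0 < d i)
    (v : Fin k → EuclideanSpace ℝ (Fin n))
    (hv : ∀ a b, ∑ i, v a i * v b i = if a = b then (1 : ℝ) else 0)
    (X : Matrix (Fin n) (Fin k) ℝ)
    (hX : ∀ i a, X i a = v a i / Real.sqrt (d i))
    (Svar : (Fin n → Fin k) → ℝ)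
    (hSvar : ∀ g : Fin n → Fin k, Svar g =
      ∑ a : Fin k, ∑ i ∈ Finset.univ.filter (fun i => g i = a), d i *
        (∑ b : Fin k, (X i b -
          (∑ j ∈ Finset.univ.filter (fun j => g j = a), d j * X j b) /
            (∑ j ∈ Finset.univ.filter (fun j => g j = a), d j)) ^ 2))
    (f : Fin n → Fin k) (hf : Function.Surjective f)
    (hmin : ∀ g : Fin n → Fin k, Svar f ≤ Svar g)
    (w : Fin k → EuclideanSpace ℝ (Fin n))
    (hw : ∀ a i, w a i = if f i = a then
      Real.sqrt (d i) / Real.sqrt (∑ j ∈ Finset.univ.filter (fun j => f j = a), d j) else 0) :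
    Svar f = ∑ a : Fin k,
      (Metric.infDist (v a) (Submodule.span ℝ (Set.range w) : Set (EuclideanSpace ℝ (Fin n)))) ^ 2 :=
  weighted_k_variance_eq_sum_dist_sq_general d hd v X hX Svar hSvar f w hw
end

section
/- Given orthonormal systems v₁,...,v_k ∈ R^n and a k-dimensional subspace F ⊆ R^n, there exists an orthonormal system ṽ₁,...,ṽ_k ∈ F such that Σ_{i=1}^k dist²(v_i, F) ≤ Σ_{i=1}^k ‖v_i − ṽ_i‖² ≤ 2 Σ_{i=1}^k dist²(v_i, F). -/
/-!
Let `P` be the orthogonal projection onto `F` and `T : ℝᵏ → F` the contraction `eᵢ ↦ P vᵢ`.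
Diagonalising `T†T` gives an orthonormal basis `(uⱼ)` whose images `T uⱼ` are pairwise
orthogonal; the isometry `U : ℝᵏ ≃ F` sending `uⱼ` to `T uⱼ / ‖T uⱼ‖` is the orthogonal factor of
the polar decomposition of `T`, and we take `wᵢ = U eᵢ`. As `dist(vᵢ, F)² = 1 - ‖P vᵢ‖²` and
`‖vᵢ - wᵢ‖² = 2 - 2⟪P vᵢ, wᵢ⟫`, the upper bound reduces to `∑ ‖T uⱼ‖² ≤ ∑ ‖T uⱼ‖` (both sides
being traces, hence basis independent), which holds because `‖T uⱼ‖ ≤ 1`.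
-/

open scoped InnerProductSpace RealInnerProductSpace
open Module

theorem LinearMap.trace_adjoint_comp_eq_sum_inner {𝕜 H K ι : Type*} [RCLike 𝕜]
    [NormedAddCommGroup H] [InnerProductSpace 𝕜 H] [FiniteDimensional 𝕜 H]
    [NormedAddCommGroup K] [InnerProductSpace 𝕜 K] [FiniteDimensional 𝕜 K] [Fintype ι]
    (A B : H →ₗ[𝕜] K) (b : OrthonormalBasis ι 𝕜 H) :
    trace 𝕜 H (A.adjoint ∘ₗ B) = ∑ i, ⟪A (b i), B (b i)⟫_𝕜 := by
  simp [trace_eq_sum_inner _ b, adjoint_inner_right]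

theorem Submodule.infDist_sq_eq_norm_sq_sub {𝕜 E : Type*} [RCLike 𝕜] [NormedAddCommGroup E]
    [InnerProductSpace 𝕜 E] (F : Submodule 𝕜 E) [F.HasOrthogonalProjection] (x : E) :
    Metric.infDist x F ^ 2 = ‖x‖ ^ 2 - ‖F.orthogonalProjectionOnto x‖ ^ 2 := by
  have hdist : Metric.infDist x F = ‖Fᗮ.starProjection x‖ := by
    rw [Metric.infDist_eq_iInf, starProjection_orthogonal', sub_apply,
      one_apply_eq_self, starProjection_minimal]
    simp [dist_eq_norm]
  rw [hdist, norm_sq_eq_add_norm_sq_projection x F]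
  simp

section

variable {H K : Type*} [NormedAddCommGroup H] [InnerProductSpace ℝ H] [FiniteDimensional ℝ H]
  [NormedAddCommGroup K] [InnerProductSpace ℝ K] [FiniteDimensional ℝ K]

theorem OrthonormalBasis.exists_inner_eq_norm_of_pairwise_inner_eq_zero {ι : Type*} [Fintype ι]
    {f : ι → K} (hf : Pairwise fun i j => ⟪f i, f j⟫ = 0) (hcard : finrank ℝ K = Fintype.card ι) :
    ∃ c : OrthonormalBasis ι ℝ K, ∀ i, ⟪f i, c i⟫ = ‖f i‖ := by
  set S : Set ι := {i | f i ≠ 0}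
  have hS : Orthonormal ℝ (S.domRestrict fun i => ‖f i‖⁻¹ • f i) := by
    refine ⟨fun ⟨i, hi⟩ => ?_, fun ⟨i, _⟩ ⟨j, _⟩ hij => ?_⟩
    · simp [norm_smul, inv_mul_cancel₀ (norm_ne_zero_iff.mpr hi)]
    · simp [real_inner_smul_left, real_inner_smul_right, hf (Subtype.coe_ne_coe.mpr hij)]
  obtain ⟨c, hc⟩ := hS.exists_orthonormalBasis_extension_of_card_eq hcard
  refine ⟨c, fun i => ?_⟩
  by_cases hi : f i = 0
  · simp [hi]
  · rw [hc i hi, real_inner_smul_right, real_inner_self_eq_norm_sq]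
    field_simp

theorem LinearMap.exists_linearIsometryEquiv_sum_norm_sq_le_sum_inner (T : H →ₗ[ℝ] K)
    (hT : ∀ x, ‖T x‖ ≤ ‖x‖) (hdim : finrank ℝ H = finrank ℝ K) {ι : Type*} [Fintype ι]
    (b : OrthonormalBasis ι ℝ H) :
    ∃ U : H ≃ₗᵢ[ℝ] K, ∑ i, ‖T (b i)‖ ^ 2 ≤ ∑ i, ⟪T (b i), U (b i)⟫ := by
  have hsymm := T.isSymmetric_adjoint_comp_self
  set u := hsymm.eigenvectorBasis rfl
  have horth : Pairwise fun i j => ⟪T (u i), T (u j)⟫ = 0 := by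
    intro i j hij
    rw [← adjoint_inner_right, ← comp_apply, hsymm.apply_eigenvectorBasis,
      real_inner_smul_right, u.orthonormal.2 hij, mul_zero]
  obtain ⟨c, hc⟩ := OrthonormalBasis.exists_inner_eq_norm_of_pairwise_inner_eq_zero horth
    (by simp [hdim])
  set U := u.equiv c (Equiv.refl _)
  refine ⟨U, ?_⟩
  have hsq : ∑ i, ‖T (b i)‖ ^ 2 = ∑ j, ‖T (u j)‖ ^ 2 := by
    simp_rw [← real_inner_self_eq_norm_sq, ← trace_adjoint_comp_eq_sum_inner]
  have hlin : ∑ i, ⟪T (b i), U (b i)⟫ = ∑ j, ‖T (u j)‖ := by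
    have := (trace_adjoint_comp_eq_sum_inner T U.toLinearEquiv.toLinearMap b).symm.trans
      (trace_adjoint_comp_eq_sum_inner T U.toLinearEquiv.toLinearMap u)
    simpa [U, hc] using this
  rw [hsq, hlin]
  gcongr with j
  exact pow_le_of_le_one (norm_nonneg _) ((hT _).trans_eq (u.orthonormal.1 j)) two_ne_zero

end

theorem Orthonormal.exists_orthonormal_sum_norm_sub_sq_le_two_mul_sum_infDist_sq
    {E ι : Type*} [NormedAddCommGroup E] [InnerProductSpace ℝ E] [Fintype ι] {v : ι → E}
    (hv : Orthonormal ℝ v) (F : Submodule ℝ E) [FiniteDimensional ℝ F]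
    (hF : finrank ℝ F = Fintype.card ι) :
    ∃ w : ι → F, Orthonormal ℝ w ∧
      ∑ i, ‖v i - w i‖ ^ 2 ≤ 2 * ∑ i, Metric.infDist (v i) F ^ 2 := by
  let b := EuclideanSpace.basisFun ι ℝ
  have hb : Orthonormal ℝ b.toBasis := by rw [OrthonormalBasis.coe_toBasis]; exact b.orthonormal
  have hbv : Orthonormal ℝ (b.toBasis.constr ℝ v ∘ b.toBasis) := by
    convert hv using 1
    exact funext (b.toBasis.constr_basis ℝ v)
  let V : EuclideanSpace ℝ ι →ₗᵢ[ℝ] E := (b.toBasis.constr ℝ v).isometryOfOrthonormal hb hbv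
  let T := F.orthogonalProjectionOnto.toLinearMap ∘ₗ V.toLinearMap
  have hTb : ∀ i, T (b i) = F.orthogonalProjectionOnto (v i) := fun i =>
    congrArg F.orthogonalProjectionOnto (b.toBasis.constr_basis ℝ v i)
  obtain ⟨U, hU⟩ := T.exists_linearIsometryEquiv_sum_norm_sq_le_sum_inner
    (fun x => (F.norm_orthogonalProjectionOnto_apply_le _).trans_eq (V.norm_map x))
    (by simp [hF]) b
  refine ⟨fun i => U (b i), b.orthonormal.comp_linearIsometryEquiv U, ?_⟩
  have hw : ∀ i, ‖(U (b i) : E)‖ = 1 := fun i => (U.norm_map (b i)).trans (b.orthonormal.1 i)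
  have hnorm : ∀ i, ‖v i - U (b i)‖ ^ 2 = 2 - 2 * ⟪T (b i), U (b i)⟫ := by
    intro i
    rw [norm_sub_sq_real, hv.1 i, hw i, hTb, F.inner_orthogonalProjectionOnto_eq_of_mem_right]
    ring
  simp only [hnorm, F.infDist_sq_eq_norm_sq_sub, hv.1, ← hTb, Finset.sum_sub_distrib,
    ← Finset.mul_sum, Finset.sum_const, one_pow, nsmul_eq_mul]
  linarith

theorem exists_orthonormal_in_subspace_close {n k : ℕ}
    (v : Fin k → EuclideanSpace ℝ (Fin n))
    (hv : Orthonormal ℝ v)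
    (F : Submodule ℝ (EuclideanSpace ℝ (Fin n)))
    (hF : Module.finrank ℝ F = k) :
    ∃ w : Fin k → EuclideanSpace ℝ (Fin n),
      (∀ i, w i ∈ F) ∧ Orthonormal ℝ w ∧
      (∑ i, (Metric.infDist (v i) (F : Set (EuclideanSpace ℝ (Fin n)))) ^ 2
          ≤ ∑ i, ‖v i - w i‖ ^ 2) ∧
      (∑ i, ‖v i - w i‖ ^ 2
          ≤ 2 * ∑ i, (Metric.infDist (v i) (F : Set (EuclideanSpace ℝ (Fin n)))) ^ 2) := by
  obtain ⟨w, hw, hle⟩ :=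
    hv.exists_orthonormal_sum_norm_sub_sq_le_two_mul_sum_infDist_sq F (by simp [hF])
  refine ⟨fun i => w i, fun i => (w i).2, hw.comp_linearIsometry F.subtypeₗᵢ, ?_, hle⟩
  gcongr with i
  · exact Metric.infDist_nonneg
  rw [← dist_eq_norm]
  exact Metric.infDist_le_dist_of_mem (w i).2
end

section
/- Let C be an n×m nonnegative matrix with total sum 1 and decompose its entries for i ∈ R_a, j ∈ C_b as c_ij = d_row,i d_col,j ĉ_{ab} + η_ij, where ĉ_{ab} is constant on blocks. Then for all X ⊆ R_a, Y ⊆ C_b: |c(X,Y) − ρ(R_a,C_b)·Vol(X)·Vol(Y)| ≤ 2‖E_ab‖_□, where ρ(R_a,C_b) = c(R_a,C_b)/(Vol(R_a)Vol(C_b)) and E_ab is the error matrix (η_ij) restricted to R_a×C_b. -/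
noncomputable def cutNorm {n m : ℕ} (A : Matrix (Fin n) (Fin m) ℝ) : ℝ :=
  ⨆ R : Finset (Fin n), ⨆ C : Finset (Fin m), |∑ i ∈ R, ∑ j ∈ C, A i j|

lemma abs_sum_le_cutNorm {n m : ℕ} (A : Matrix (Fin n) (Fin m) ℝ)
    (R : Finset (Fin n)) (Q : Finset (Fin m)) :
    |∑ i ∈ R, ∑ j ∈ Q, A i j| ≤ cutNorm A := by
  have h1 : |∑ i ∈ R, ∑ j ∈ Q, A i j| ≤ ⨆ C : Finset (Fin m), |∑ i ∈ R, ∑ j ∈ C, A i j| :=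
    le_ciSup (f := fun C : Finset (Fin m) => |∑ i ∈ R, ∑ j ∈ C, A i j|)
      (Set.Finite.bddAbove (Set.finite_range _)) Q
  exact h1.trans (le_ciSup
    (f := fun R : Finset (Fin n) => ⨆ C : Finset (Fin m), |∑ i ∈ R, ∑ j ∈ C, A i j|)
    (Set.Finite.bddAbove (Set.finite_range _)) R)

lemma cutNorm_nonneg {n m : ℕ} (A : Matrix (Fin n) (Fin m) ℝ) : 0 ≤ cutNorm A := by
  have := abs_sum_le_cutNorm A ∅ ∅
  simpa using this

theorem block_decomposition_discrepancy_bound {n m k : ℕ}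
    (C : Matrix (Fin n) (Fin m) ℝ) (hC : ∀ i j, 0 ≤ C i j)
    (htot : ∑ i, ∑ j, C i j = 1)
    (drow : Fin n → ℝ) (dcol : Fin m → ℝ)
    (hdrow : ∀ i, drow i = ∑ j, C i j) (hdcol : ∀ j, dcol j = ∑ i, C i j)
    (hrpos : ∀ i, 0 < drow i) (hcpos : ∀ j, 0 < dcol j)
    (f : Fin n → Fin k) (g : Fin m → Fin k)
    (chat : Fin k → Fin k → ℝ)
    (η : Matrix (Fin n) (Fin m) ℝ)
    (hdecomp : ∀ i j, C i j = drow i * dcol j * chat (f i) (g j) + η i j)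
    (E : Fin k → Fin k → Matrix (Fin n) (Fin m) ℝ)
    (hE : ∀ a b i j, E a b i j = if f i = a ∧ g j = b then η i j else 0) :
    ∀ (a b : Fin k) (X : Finset (Fin n)) (Y : Finset (Fin m)),
      (∀ i ∈ X, f i = a) → (∀ j ∈ Y, g j = b) →
      |(∑ i ∈ X, ∑ j ∈ Y, C i j)
          - ((∑ i ∈ Finset.univ.filter (fun i => f i = a),
                ∑ j ∈ Finset.univ.filter (fun j => g j = b), C i j)
              / ((∑ i ∈ Finset.univ.filter (fun i => f i = a), drow i)
                * (∑ j ∈ Finset.univ.filter (fun j => g j = b), dcol j)))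
            * (∑ i ∈ X, drow i) * (∑ j ∈ Y, dcol j)|
        ≤ 2 * cutNorm (E a b) := by
  intro a b X Y hX hY
  set Ra := Finset.univ.filter (fun i => f i = a) with hRa
  set Cb := Finset.univ.filter (fun j => g j = b) with hCb
  have hRaP : ∀ i ∈ Ra, f i = a := fun i hi => (Finset.mem_filter.1 hi).2
  have hCbP : ∀ j ∈ Cb, g j = b := fun j hj => (Finset.mem_filter.1 hj).2
  have hXsub : X ⊆ Ra := fun i hi => Finset.mem_filter.2 ⟨Finset.mem_univ _, hX i hi⟩
  have hYsub : Y ⊆ Cb := fun j hj => Finset.mem_filter.2 ⟨Finset.mem_univ _, hY j hj⟩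
  have key : ∀ (P : Finset (Fin n)) (Q : Finset (Fin m)),
      (∀ i ∈ P, f i = a) → (∀ j ∈ Q, g j = b) →
      ∑ i ∈ P, ∑ j ∈ Q, C i j
        = chat a b * (∑ i ∈ P, drow i) * (∑ j ∈ Q, dcol j) + ∑ i ∈ P, ∑ j ∈ Q, η i j := by
    intro P Q hP hQ
    have h1 : ∑ i ∈ P, ∑ j ∈ Q, C i j
        = ∑ i ∈ P, ∑ j ∈ Q, (drow i * dcol j * chat a b + η i j) := by
      refine Finset.sum_congr rfl fun i hi => Finset.sum_congr rfl fun j hj => ?_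
      rw [hdecomp, hP i hi, hQ j hj]
    rw [h1]
    simp only [Finset.sum_add_distrib]
    congr 1
    simp_rw [mul_assoc, ← Finset.mul_sum, ← Finset.sum_mul]
    ring
  have hEsum : ∀ (P : Finset (Fin n)) (Q : Finset (Fin m)),
      (∀ i ∈ P, f i = a) → (∀ j ∈ Q, g j = b) →
      ∑ i ∈ P, ∑ j ∈ Q, η i j = ∑ i ∈ P, ∑ j ∈ Q, E a b i j := by
    intro P Q hP hQ
    refine Finset.sum_congr rfl fun i hi => Finset.sum_congr rfl fun j hj => ?_
    rw [hE, if_pos ⟨hP i hi, hQ j hj⟩]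
  set K := cutNorm (E a b) with hK
  have hKnn : 0 ≤ K := cutNorm_nonneg _
  have he1 : |∑ i ∈ X, ∑ j ∈ Y, η i j| ≤ K := by
    rw [hEsum X Y hX hY]; exact abs_sum_le_cutNorm _ _ _
  have he2 : |∑ i ∈ Ra, ∑ j ∈ Cb, η i j| ≤ K := by
    rw [hEsum Ra Cb hRaP hCbP]; exact abs_sum_le_cutNorm _ _ _
  rcases X.eq_empty_or_nonempty with hXe | hXne
  · subst hXe; simp [hKnn, mul_nonneg]
  rcases Y.eq_empty_or_nonempty with hYe | hYne
  · subst hYe; simp [hKnn, mul_nonneg]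
  have hvR : 0 < ∑ i ∈ Ra, drow i :=
    Finset.sum_pos (fun i _ => hrpos i) (hXne.mono hXsub)
  have hvC : 0 < ∑ j ∈ Cb, dcol j :=
    Finset.sum_pos (fun j _ => hcpos j) (hYne.mono hYsub)
  have hvX : 0 ≤ ∑ i ∈ X, drow i := Finset.sum_nonneg fun i _ => (hrpos i).le
  have hvY : 0 ≤ ∑ j ∈ Y, dcol j := Finset.sum_nonneg fun j _ => (hcpos j).le
  have hvXle : ∑ i ∈ X, drow i ≤ ∑ i ∈ Ra, drow i :=
    Finset.sum_le_sum_of_subset_of_nonneg hXsub (fun i _ _ => (hrpos i).le)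
  have hvYle : ∑ j ∈ Y, dcol j ≤ ∑ j ∈ Cb, dcol j :=
    Finset.sum_le_sum_of_subset_of_nonneg hYsub (fun j _ _ => (hcpos j).le)
  set e1 := ∑ i ∈ X, ∑ j ∈ Y, η i j with he1d
  set e2 := ∑ i ∈ Ra, ∑ j ∈ Cb, η i j with he2d
  set vX := ∑ i ∈ X, drow i
  set vY := ∑ j ∈ Y, dcol j
  set vR := ∑ i ∈ Ra, drow i
  set vC := ∑ j ∈ Cb, dcol j
  set t := vX * vY / (vR * vC) with ht
  have htnn : 0 ≤ t := by positivity
  have htle : t ≤ 1 := by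
    rw [ht, div_le_one (by positivity)]
    exact mul_le_mul hvXle hvYle hvY hvR.le
  have hexp : (∑ i ∈ X, ∑ j ∈ Y, C i j)
      - ((∑ i ∈ Ra, ∑ j ∈ Cb, C i j) / (vR * vC)) * vX * vY = e1 - e2 * t := by
    rw [key X Y hX hY, key Ra Cb hRaP hCbP, ht]
    field_simp
    ring
  rw [hexp]
  calc |e1 - e2 * t| ≤ |e1| + |e2| * t := by
        have := abs_sub e1 (e2 * t)
        have h2 : |e2 * t| = |e2| * t := by rw [abs_mul, abs_of_nonneg htnn]
        calc |e1 - e2 * t| ≤ |e1| + |e2 * t| := abs_sub _ _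
        _ = |e1| + |e2| * t := by rw [h2]
    _ ≤ K + K * 1 := by
        have : |e2| * t ≤ K * 1 := by
          apply mul_le_mul he2 htle htnn hKnn
        linarith
    _ = 2 * K := by ring
end
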